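/- For all real numbers a and c, the k-vector space Hom_Sh(k_{[a,∞)}, k_{[c,∞)}) is one-dimensional (isomorphic to k) if a ≤ c, and is zero if c < a. (This is the case b = d = +∞ of the Hom computation in the paper's Lemma on interval sheaves: Hom(k_{[a,b)}, k_{[c,d)}) ≅ k if a ≤ c < b ≤ d and 0 otherwise.) -/

import Mathlib

/-
Common setup: the abelian category `Sh k` of sheaves of `k`-modules on `ℝ`, the sheaves
`k_{[a,∞)}` (pushforward to `ℝ` of the constant sheaf with stalk `k` on the subspace `[a,∞)`),
the canonical restriction morphisms `r_{a,b}` (pushforward along `[a,∞) ↪ ℝ` of the unit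
morphism from the constant sheaf on `[a,∞)` to the pushforward of its restriction along
`[b,∞) ↪ [a,∞)`), the half-open interval sheaves `k_{[a,b)} := ker r_{a,b}`, Ext groups,
stalks, and the constant sheaf `k_ℝ`.
-/

open CategoryTheory CategoryTheory.Limits TopCat TopologicalSpace

noncomputable section

/-- The category `Sh` of sheaves of `k`-modules on the real line `ℝ`. -/
abbrev Sh (k : Type) [Field k] :=
  CategoryTheory.Sheaf (Opens.grothendieckTopology (TopCat.of ℝ)) (ModuleCat.{0} k)

variable (k : Type) [Field k]

instance : HasExt.{1} (Sh k) := by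
  letI := HasDerivedCategory.standard (Sh k)
  exact hasExt_of_hasDerivedCategory _

instance (F G : Sh k) : SMul k (F ⟶ G) := ⟨fun c f => ⟨c • f.1⟩⟩

/-- The `k`-vector space structure on the Hom groups of `Sh k`. -/
instance (F G : Sh k) : Module k (F ⟶ G) :=
  Function.Injective.module k
    ({ toFun := fun f => f.1, map_zero' := rfl, map_add' := fun _ _ => rfl } :
      (F ⟶ G) →+ (F.1 ⟶ G.1))
    (fun _ _ h => Sheaf.hom_ext h) (fun _ _ => rfl)

/-- The subspace `[a,∞)` of `ℝ` as a topological space. -/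
abbrev IciSp (a : ℝ) : TopCat := TopCat.of (Set.Ici a)

/-- The closed inclusion `[a,∞) ↪ ℝ`. -/
def inclIci (a : ℝ) : IciSp a ⟶ TopCat.of ℝ := TopCat.ofHom ⟨Subtype.val, continuous_subtype_val⟩

/-- The closed inclusion `[b,∞) ↪ [a,∞)` for `a ≤ b`. -/
def inclIciIci {a b : ℝ} (h : a ≤ b) : IciSp b ⟶ IciSp a :=
  TopCat.ofHom ⟨fun x => ⟨x.1, le_trans h x.2⟩, Continuous.subtype_mk continuous_subtype_val _⟩

/-- The constant sheaf with stalk `k` on the subspace `[a,∞)`. -/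
def constIci (a : ℝ) : TopCat.Sheaf (ModuleCat.{0} k) (IciSp a) :=
  (constantSheaf (Opens.grothendieckTopology (IciSp a)) (ModuleCat.{0} k)).obj (ModuleCat.of k k)

/-- `k_{[a,∞)}`: the pushforward to `ℝ`, along the closed inclusion `[a,∞) ↪ ℝ`, of the
constant sheaf on the subspace `[a,∞)` with stalk `k`. -/
def kIci (a : ℝ) : Sh k :=
  (TopCat.Sheaf.pushforward (ModuleCat.{0} k) (inclIci a)).obj (constIci k a)

/-- The pushforward to `ℝ` along `[a,∞) ↪ ℝ` of the pushforward along `[b,∞) ↪ [a,∞)` of the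
restriction (pullback) of the constant sheaf on `[a,∞)`: the incarnation of `k_{[b,∞)}` which is
the codomain of the canonical restriction morphism `r_{a,b}`. -/
def kIciRes {a b : ℝ} (h : a ≤ b) : Sh k :=
  (TopCat.Sheaf.pushforward (ModuleCat.{0} k) (inclIci a)).obj
    ((TopCat.Sheaf.pushforward (ModuleCat.{0} k) (inclIciIci h)).obj
      ((TopCat.Sheaf.pullback (ModuleCat.{0} k) (inclIciIci h)).obj (constIci k a)))

/-- The canonical restriction morphism `r_{a,b} : k_{[a,∞)} ⟶ k_{[b,∞)}`: the pushforward along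
`[a,∞) ↪ ℝ` of the unit morphism from the constant sheaf on `[a,∞)` to the pushforward of its
restriction along the closed inclusion `[b,∞) ↪ [a,∞)`. -/
def res {a b : ℝ} (h : a ≤ b) : kIci k a ⟶ kIciRes k h :=
  (TopCat.Sheaf.pushforward (ModuleCat.{0} k) (inclIci a)).map
    ((TopCat.Sheaf.pullbackPushforwardAdjunction (ModuleCat.{0} k) (inclIciIci h)).unit.app
      (constIci k a))

/-- `k_{[a,b)}`: the kernel in `Sh k` of the restriction morphism `r_{a,b}`. -/
def kIco {a b : ℝ} (h : a < b) : Sh k := kernel (res k h.le)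

/-- The stalk at `x : ℝ` of a sheaf of `k`-modules on `ℝ`. -/
def stalkAt (F : Sh k) (x : ℝ) : ModuleCat k :=
  TopCat.Presheaf.stalk (C := ModuleCat.{0} k) (X := TopCat.of ℝ) F.1 x

/-- `k_ℝ`: the constant sheaf on `ℝ` with stalk `k`. -/
def kConst : Sh k :=
  (constantSheaf (Opens.grothendieckTopology (TopCat.of ℝ)) (ModuleCat.{0} k)).obj
    (ModuleCat.of k k)


/-!
The map `χ ↦ χ(1)`, evaluating a morphism at the unit global section `1` of `k_{[a,∞)}`, embeds
`Hom(k_{[a,∞)}, k_{[c,∞)})` into `Γ(ℝ, k_{[c,∞)}) = Γ([c,∞), k) ≅ k` (the half-line is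
connected). It is injective because along an inducing map with closed range every section of
the pushforward of a constant sheaf is locally a multiple of `1`. If `a ≤ c`, the restriction
`k_{[a,∞)} → k_{[c,∞)}` sends `1` to `1`, so the embedding is onto. If `c < a`, then `χ(1)`
vanishes on `(-∞, a)`, which meets `[c,∞)`, and a global section of a constant sheaf on a
connected space vanishing on a nonempty open set is zero.
-/

open Opposite

lemma constPresheaf_hom_ext {C : Type*} [Category* C] {T : C} (hT : IsTerminal T)
    {R : Type} [Ring R] {G : Cᵒᵖ ⥤ ModuleCat.{0} R}
    {ν ν' : (Functor.const Cᵒᵖ).obj (ModuleCat.of R R) ⟶ G}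
    (h : ν.app (op T) (1 : R) = ν'.app (op T) (1 : R)) : ν = ν' := by
  ext U
  have eval_eq (ν : (Functor.const Cᵒᵖ).obj (ModuleCat.of R R) ⟶ G) :
      ν.app U (1 : R) = G.map (hT.from U.unop).op (ν.app (op T) (1 : R)) := by
    rw [← ConcreteCategory.comp_apply, ← ν.naturality]
    rfl
  rw [eval_eq ν, eval_eq ν', h]

lemma TopCat.Sheaf.hom_ext_of_isLocallySurjective {C : Type*} [Category* C]
    {FC : C → C → Type*} {CC : C → Type*} [∀ X Y, FunLike (FC X Y) (CC X) (CC Y)]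
    [ConcreteCategory C FC] [HasLimitsOfSize.{0, 0} C]
    [(CategoryTheory.forget C).ReflectsIsomorphisms]
    [PreservesLimitsOfSize.{0, 0} (CategoryTheory.forget C)] {Y : TopCat.{0}}
    {P F : Y.Presheaf C} {G : Y.Sheaf C} (μ : P ⟶ F)
    [CategoryTheory.Presheaf.IsLocallySurjective (Opens.grothendieckTopology Y) μ]
    {φ ψ : F ⟶ G.obj} (h : μ ≫ φ = μ ≫ ψ) : φ = ψ := by
  refine NatTrans.ext (funext fun U => ConcreteCategory.hom_ext _ _ fun s => ?_)
  choose W i hs hyW using fun (y : Y) (hy : y ∈ U.unop) =>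
    Presheaf.imageSieve_mem (Opens.grothendieckTopology Y) μ s y hy
  refine G.eq_of_locally_eq' (fun y : U.unop => W y y.2) U.unop (fun y => i y y.2)
    (fun y hy => Opens.mem_iSup.2 ⟨⟨y, hy⟩, hyW y hy⟩) _ _ fun y => ?_
  obtain ⟨t, ht⟩ := hs y y.2
  rw [← ConcreteCategory.comp_apply, ← ConcreteCategory.comp_apply, ← φ.naturality,
    ← ψ.naturality, ConcreteCategory.comp_apply, ConcreteCategory.comp_apply, ← ht,
    ← ConcreteCategory.comp_apply, ← ConcreteCategory.comp_apply, ← NatTrans.comp_app,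
    ← NatTrans.comp_app, h]

lemma TopCat.Sheaf.subsingleton_obj_of_eq_bot {R : Type} [Ring R] {X : TopCat.{0}}
    (F : X.Sheaf (ModuleCat.{0} R)) {U : Opens X} (hU : U = ⊥) :
    Subsingleton (F.obj.obj (op U)) :=
  ModuleCat.subsingleton_of_isZero (F.isTerminalOfEqEmpty hU).isZero

section ConstantSheaf

variable (X : TopCat.{0})

abbrev constSheaf : X.Sheaf (ModuleCat.{0} k) :=
  (constantSheaf (Opens.grothendieckTopology X) (ModuleCat.{0} k)).obj (ModuleCat.of k k)

abbrev toConstSheaf :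
    (Functor.const (Opens X)ᵒᵖ).obj (ModuleCat.of k k) ⟶ (constSheaf k X).obj :=
  toSheafify _ _

instance : Presheaf.IsLocallyInjective (Opens.grothendieckTopology X) (toConstSheaf k X) :=
  inferInstanceAs (Presheaf.IsLocallyInjective _ (toSheafify _ _))

instance : Presheaf.IsLocallySurjective (Opens.grothendieckTopology X) (toConstSheaf k X) :=
  inferInstanceAs (Presheaf.IsLocallySurjective _ (toSheafify _ _))

variable {k X}

lemma toConstSheaf_restrict {W V : Opens X} (i : W ⟶ V) (t : k) :
    (constSheaf k X).obj.map i.op ((toConstSheaf k X).app (op V) t) =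
      (toConstSheaf k X).app (op W) t := by
  simpa using (ConcreteCategory.congr_hom ((toConstSheaf k X).naturality i.op) t).symm

lemma toConstSheaf_injective {V : Opens X} (hV : (V : Set X).Nonempty) :
    Function.Injective ((toConstSheaf k X).app (op V)) := by
  intro t t' h
  obtain ⟨x, hx⟩ := hV
  obtain ⟨W, i, hSi, -⟩ :=
    Presheaf.equalizerSieve_mem (Opens.grothendieckTopology X) (toConstSheaf k X) t t' h x hx
  simpa using hSi

lemma toConstSheaf_top_surjective [Nonempty X] [PreconnectedSpace X] :
    Function.Surjective ((toConstSheaf k X).app (op ⊤)) := by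
  intro s
  choose W i ht hxW using fun x : X =>
    Presheaf.imageSieve_mem (Opens.grothendieckTopology X) (toConstSheaf k X) s x trivial
  choose t ht using ht
  have restrict_eq {x : X} {V : Opens X} (j : V ⟶ W x) :
      (constSheaf k X).obj.map (j ≫ i x).op s = (toConstSheaf k X).app (op V) (t x) := by
    rw [op_comp, Functor.map_comp, ConcreteCategory.comp_apply, ← ht, toConstSheaf_restrict]
  have ht_const : IsLocallyConstant t := by
    refine IsLocallyConstant.iff_exists_open _ |>.2 fun x => ⟨W x, (W x).2, hxW x, fun y hy => ?_⟩
    apply toConstSheaf_injective (V := W x ⊓ W y) ⟨y, hy, hxW y⟩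
    rw [← restrict_eq (homOfLE inf_le_right), ← restrict_eq (homOfLE inf_le_left)]
    rfl
  obtain ⟨x₀⟩ := ‹Nonempty X›
  refine ⟨t x₀, (constSheaf k X).eq_of_locally_eq' W ⊤ i
    (fun x _ => Opens.mem_iSup.2 ⟨x, hxW x⟩) _ _ fun x => ?_⟩
  rw [toConstSheaf_restrict, ← ht, ht_const.apply_eq_of_preconnectedSpace x₀ x]

lemma constSheaf_map_injective [Nonempty X] [PreconnectedSpace X] {V : Opens X}
    (hV : (V : Set X).Nonempty) :
    Function.Injective ((constSheaf k X).obj.map (homOfLE (le_top : V ≤ ⊤)).op) := by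
  intro s s' h
  obtain ⟨t, rfl⟩ := toConstSheaf_top_surjective (k := k) s
  obtain ⟨t', rfl⟩ := toConstSheaf_top_surjective (k := k) s'
  rw [toConstSheaf_restrict, toConstSheaf_restrict] at h
  rw [toConstSheaf_injective hV h]

end ConstantSheaf

section Pushforward

variable {X Y : TopCat.{0}}

def toPushforwardConstSheaf (f : X ⟶ Y) :
    (Functor.const (Opens Y)ᵒᵖ).obj (ModuleCat.of k k) ⟶
      ((TopCat.Sheaf.pushforward (ModuleCat.{0} k) f).obj (constSheaf k X)).obj :=
  Functor.whiskerLeft (Opens.map f).op (toConstSheaf k X)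

def constSheafToPushforward (f : X ⟶ Y) :
    constSheaf k Y ⟶ (TopCat.Sheaf.pushforward (ModuleCat.{0} k) f).obj (constSheaf k X) :=
  ⟨sheafifyLift _ (toPushforwardConstSheaf k f)
    ((TopCat.Sheaf.pushforward (ModuleCat.{0} k) f).obj (constSheaf k X)).property⟩

variable {k}

lemma constSheafToPushforward_app_one (f : X ⟶ Y) :
    (constSheafToPushforward k f).hom.app (op ⊤) ((toConstSheaf k Y).app (op ⊤) (1 : k)) =
      (toPushforwardConstSheaf k f).app (op ⊤) (1 : k) :=
  ConcreteCategory.congr_hom (NatTrans.congr_app (toSheafify_sheafifyLift _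
    (toPushforwardConstSheaf k f)
    ((TopCat.Sheaf.pushforward (ModuleCat.{0} k) f).obj (constSheaf k X)).property) (op ⊤)) (1 : k)

/-- Near a point of the range, sections come from an open of `X`, which is the trace of an open
of `Y` since `f` is inducing; off the closed range, the pushforward has no nonzero sections. -/
lemma isLocallySurjective_toPushforwardConstSheaf {f : X ⟶ Y} (hf : Topology.IsInducing f)
    (hcl : IsClosed (Set.range f)) :
    CategoryTheory.Presheaf.IsLocallySurjective (Opens.grothendieckTopology Y)
      (toPushforwardConstSheaf k f) := by
  constructor
  intro U s y hy
  by_cases hyf : y ∈ Set.range f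
  · obtain ⟨x, rfl⟩ := hyf
    obtain ⟨W, i, ⟨t, ht⟩, hxW⟩ :=
      Presheaf.imageSieve_mem (Opens.grothendieckTopology X) (toConstSheaf k X) s x hy
    obtain ⟨V, hV, hVW⟩ := hf.isOpen_iff.1 W.2
    have hxV : f x ∈ V := show x ∈ f ⁻¹' V from hVW ▸ hxW
    have hsub : (Opens.map f).obj (⟨V, hV⟩ ⊓ U) ≤ W :=
      fun x hx => show x ∈ W.carrier from hVW ▸ hx.1
    refine ⟨⟨V, hV⟩ ⊓ U, homOfLE inf_le_right, ⟨t, ?_⟩, hxV, hy⟩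
    have hrestr := congrArg (ConcreteCategory.hom ((constSheaf k X).obj.map (homOfLE hsub).op)) ht
    rw [toConstSheaf_restrict] at hrestr
    exact hrestr.trans (ConcreteCategory.congr_hom ((constSheaf k X).obj.map_comp _ _).symm s)
  · refine ⟨U ⊓ ⟨(Set.range f)ᶜ, hcl.isOpen_compl⟩, homOfLE inf_le_left, ⟨0, ?_⟩, hy, hyf⟩
    have hempty : (Opens.map f).obj (U ⊓ ⟨(Set.range f)ᶜ, hcl.isOpen_compl⟩) = ⊥ :=
      Opens.ext <| Set.eq_empty_of_forall_notMem fun x hx => hx.2 ⟨x, rfl⟩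
    exact ((constSheaf k X).subsingleton_obj_of_eq_bot hempty).elim _ _

lemma pushforward_constSheaf_hom_ext {f : X ⟶ Y} (hf : Topology.IsInducing f)
    (hcl : IsClosed (Set.range f)) {G : Y.Sheaf (ModuleCat.{0} k)}
    {φ ψ : (TopCat.Sheaf.pushforward (ModuleCat.{0} k) f).obj (constSheaf k X) ⟶ G}
    (h : φ.hom.app (op ⊤) ((toPushforwardConstSheaf k f).app (op ⊤) (1 : k)) =
      ψ.hom.app (op ⊤) ((toPushforwardConstSheaf k f).app (op ⊤) (1 : k))) : φ = ψ :=
  have := isLocallySurjective_toPushforwardConstSheaf (k := k) hf hcl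
  Sheaf.hom_ext <| TopCat.Sheaf.hom_ext_of_isLocallySurjective (toPushforwardConstSheaf k f) <|
    constPresheaf_hom_ext isTerminalTop h

end Pushforward

section HalfLine

instance (a : ℝ) : PreconnectedSpace (IciSp a) :=
  Subtype.preconnectedSpace isPreconnected_Ici

lemma isInducing_inclIci (a : ℝ) : Topology.IsInducing (inclIci a) :=
  Topology.IsInducing.subtypeVal

lemma isClosed_range_inclIci (a : ℝ) : IsClosed (Set.range (inclIci a)) :=
  Subtype.range_val (s := Set.Ici a) ▸ isClosed_Ici

def evalOne (a c : ℝ) : (kIci k a ⟶ kIci k c) →ₗ[k] (kIci k c).obj.obj (op ⊤) where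
  toFun χ := χ.hom.app (op ⊤) ((toPushforwardConstSheaf k (inclIci a)).app (op ⊤) (1 : k))
  map_add' _ _ := rfl
  map_smul' _ _ := rfl

def kIciGlobalSectionsEquiv (c : ℝ) : (kIci k c).obj.obj (op ⊤) ≃ₗ[k] k :=
  (LinearEquiv.ofBijective ((toConstSheaf k (IciSp c)).app (op ⊤)).hom
    ⟨toConstSheaf_injective ⟨⟨c, Set.self_mem_Ici⟩, trivial⟩, toConstSheaf_top_surjective⟩).symm

variable {k}

lemma evalOne_injective (a c : ℝ) : Function.Injective (evalOne k a c) :=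
  fun _ _ h => pushforward_constSheaf_hom_ext (isInducing_inclIci a) (isClosed_range_inclIci a) h

lemma evalOne_surjective {a c : ℝ} (h : a ≤ c) : Function.Surjective (evalOne k a c) := by
  let ρ : kIci k a ⟶ kIci k c :=
    (TopCat.Sheaf.pushforward (ModuleCat.{0} k) (inclIci a)).map
      (constSheafToPushforward k (inclIciIci h))
  have hρ : evalOne k a c ρ = (toConstSheaf k (IciSp c)).app (op ⊤) (1 : k) :=
    constSheafToPushforward_app_one (inclIciIci h)
  intro s
  obtain ⟨t, rfl⟩ := toConstSheaf_top_surjective (k := k) (X := IciSp c) s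
  refine ⟨t • ρ, ?_⟩
  rw [map_smul, hρ]
  exact (((toConstSheaf k (IciSp c)).app (op ⊤)).hom.map_smul t (1 : k)).symm.trans
    (congrArg _ (mul_one (show k from t)))

lemma evalOne_eq_zero {a c : ℝ} (h : c < a) (χ : kIci k a ⟶ kIci k c) : evalOne k a c χ = 0 := by
  let U : Opens (TopCat.of ℝ) := ⟨Set.Iio a, isOpen_Iio⟩
  have hempty : (Opens.map (inclIci a)).obj U = ⊥ :=
    Opens.ext <| Set.eq_empty_of_forall_notMem fun x (hx : x.1 < a) => not_lt.2 x.2 hx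
  apply constSheaf_map_injective (X := IciSp c) (V := (Opens.map (inclIci c)).obj U)
    ⟨⟨c, Set.self_mem_Ici⟩, h⟩
  let r := (homOfLE (le_top : U ≤ ⊤)).op
  let one := (toPushforwardConstSheaf k (inclIci a)).app (op ⊤) (1 : k)
  calc (kIci k c).obj.map r (evalOne k a c χ)
      = χ.hom.app (op U) ((kIci k a).obj.map r one) :=
        (ConcreteCategory.congr_hom (χ.hom.naturality r) one).symm
    _ = χ.hom.app (op U) 0 :=
        congrArg _ (((constSheaf k (IciSp a)).subsingleton_obj_of_eq_bot hempty).elim _ _)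
    _ = (kIci k c).obj.map r 0 := by rw [map_zero, map_zero]

end HalfLine

/-- For all real numbers `a` and `c`, the `k`-vector space `Hom_Sh(k_{[a,inf)}, k_{[c,inf)})` is
one-dimensional (isomorphic to `k`) if `a <= c`, and is zero if `c < a`. -/
theorem hom_kIci_kIci (k : Type) [Field k] (a c : ℝ) :
    (a ≤ c → Nonempty ((kIci k a ⟶ kIci k c) ≃ₗ[k] k)) ∧
    (c < a → Subsingleton (kIci k a ⟶ kIci k c)) :=
  ⟨fun h => ⟨(LinearEquiv.ofBijective (evalOne k a c)
      ⟨evalOne_injective a c, evalOne_surjective h⟩).trans (kIciGlobalSectionsEquiv k c)⟩,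
    fun h => ⟨fun φ ψ => evalOne_injective a c <|
      (evalOne_eq_zero h φ).trans (evalOne_eq_zero h ψ).symm⟩⟩
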